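/- The one-relator group ⟨x, y, z | x y z y z z x x y z y z = 1⟩ is isomorphic to the free group of rank 2. -/

import Mathlib

/-- The relator x y z y z z x x y z y z over generators indexed by `Fin 3`
(0 ↦ x, 1 ↦ y, 2 ↦ z). -/
def ohareUnitRels : Set (FreeGroup (Fin 3)) :=
  {FreeGroup.of 0 * FreeGroup.of 1 * FreeGroup.of 2 * FreeGroup.of 1 * FreeGroup.of 2 *
    FreeGroup.of 2 * FreeGroup.of 0 * FreeGroup.of 0 * FreeGroup.of 1 * FreeGroup.of 2 *
    FreeGroup.of 1 * FreeGroup.of 2}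

/-!
Put `t = y z`. The relator becomes `x t t z x x t t`, in which `z` occurs exactly once, so the
relation just says `z = (x t t)⁻¹ (x x t t)⁻¹`, and then `y = t z⁻¹`. Hence `x, t` generate the
group freely.
-/

namespace Ohare

variable {G H : Type*} [Group G] [Group H]

def relator (x y z : G) : G := x * y * z * y * z * z * x * x * y * z * y * z

def zOf (x t : G) : G := (x * t * t)⁻¹ * (x * x * t * t)⁻¹

def yOf (x t : G) : G := t * (zOf x t)⁻¹

lemma map_relator (f : G →* H) (x y z : G) :
    f (relator x y z) = relator (f x) (f y) (f z) := by
  simp only [relator, map_mul]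

lemma map_zOf (f : G →* H) (x t : G) : f (zOf x t) = zOf (f x) (f t) := by
  simp only [zOf, map_mul, map_inv]

lemma map_yOf (f : G →* H) (x t : G) : f (yOf x t) = yOf (f x) (f t) := by
  simp only [yOf, map_mul, map_inv, map_zOf]

lemma relator_eq_one_iff (x y z : G) : relator x y z = 1 ↔ z = zOf x (y * z) := by
  have h : relator x y z = x * (y * z) * (y * z) * z * (x * x * (y * z) * (y * z)) := by
    simp only [relator, mul_assoc]
  rw [h, zOf, mul_eq_one_iff_eq_inv, ← eq_inv_mul_iff_mul_eq]

lemma yOf_mul_zOf (x t : G) : yOf x t * zOf x t = t :=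
  inv_mul_cancel_right t _

lemma relator_yOf_zOf (x t : G) : relator x (yOf x t) (zOf x t) = 1 := by
  rw [relator_eq_one_iff, yOf_mul_zOf]

lemma yOf_eq_of_relator_eq_one {x y z : G} (h : relator x y z = 1) : yOf x (y * z) = y := by
  rw [yOf, ← (relator_eq_one_iff x y z).1 h, mul_inv_cancel_right]

lemma ohareUnitRels_eq :
    ohareUnitRels = {relator (FreeGroup.of 0) (FreeGroup.of 1) (FreeGroup.of 2)} :=
  rfl

lemma relator_presentedGroup_of :
    relator (PresentedGroup.of (rels := ohareUnitRels) 0) (.of 1) (.of 2) = 1 :=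
  (map_relator (PresentedGroup.mk _) _ _ _).symm.trans (PresentedGroup.one_of_mem rfl)

def lift (x y z : G) (h : relator x y z = 1) : PresentedGroup ohareUnitRels →* G :=
  PresentedGroup.toGroup (f := ![x, y, z]) <| by
    rw [ohareUnitRels_eq]
    rintro r rfl
    simpa [map_relator] using h

end Ohare

open Ohare in
/-- The one-relator group ⟨x, y, z | xyzyzzxxyzyz = 1⟩ is isomorphic
to the free group of rank 2. -/
theorem ohare_units_free_of_rank_two :
    Nonempty (PresentedGroup ohareUnitRels ≃* FreeGroup (Fin 2)) := by
  let x : PresentedGroup ohareUnitRels := .of 0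
  let y : PresentedGroup ohareUnitRels := .of 1
  let z : PresentedGroup ohareUnitRels := .of 2
  let a : FreeGroup (Fin 2) := .of 0
  let b : FreeGroup (Fin 2) := .of 1
  let φ := lift a (yOf a b) (zOf a b) (relator_yOf_zOf a b)
  let ψ : FreeGroup (Fin 2) →* PresentedGroup ohareUnitRels := FreeGroup.lift ![x, y * z]
  have hφx : φ x = a := PresentedGroup.toGroup.of _
  have hφy : φ y = yOf a b := PresentedGroup.toGroup.of _
  have hφz : φ z = zOf a b := PresentedGroup.toGroup.of _
  have hψa : ψ a = x := FreeGroup.lift_apply_of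
  have hψb : ψ b = y * z := FreeGroup.lift_apply_of
  have hrel : relator x y z = 1 := relator_presentedGroup_of
  refine ⟨φ.toMulEquiv ψ (PresentedGroup.ext fun i => ?_) (FreeGroup.ext_hom _ _ fun i => ?_)⟩
  · fin_cases i
    · exact congrArg ψ hφx |>.trans hψa
    · change ψ (φ y) = y
      rw [hφy, map_yOf, hψa, hψb, yOf_eq_of_relator_eq_one hrel]
    · change ψ (φ z) = z
      rw [hφz, map_zOf, hψa, hψb, ← (relator_eq_one_iff x y z).1 hrel]
  · fin_cases i
    · exact congrArg φ hψa |>.trans hφx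
    · change φ (ψ b) = b
      rw [hψb, map_mul, hφy, hφz, yOf_mul_zOf]
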